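/- Let $R$ be a commutative ring, $n \ge 1$, $m \ge 2$, let $B_1, \dots, B_m$ be $n \times n$ matrices over $R$, and let $u_1, \dots, u_m \in R$. Let $C$ be the $mn \times mn$ block matrix whose $(i,i)$ block is $u_i B_i$, whose $(i,i+1)$ block is $-I_n$ for $1 \le i \le m-1$, whose $(m,1)$ block is $-I_n$, and all of whose other blocks are zero. Then, with $u = u_1 \cdots u_m$ and $B = B_m B_{m-1} \cdots B_1$, one has $\det C = \det(u B - I_n)$. -/

import Mathlib

/-!
Write `C` as the block matrix `diagonal A - P`, where `Aᵢ = uᵢ • Bᵢ` and `P` is the block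
permutation matrix of the cyclic shift `i ↦ i + 1`. Multiplying on the right by the unipotent block
matrix whose first block column holds the partial products `Fᵢ = Aᵢ₋₁ ⋯ A₀` clears the first
block column of `C`, except for its last entry `A_{m-1} ⋯ A₀ - 1`. Rotating the block columns then
gives a block lower triangular matrix with diagonal blocks `-1, …, -1, A_{m-1} ⋯ A₀ - 1`, and the
sign of the rotation cancels against the determinant of the `-1` blocks.
-/

open Matrix

theorem List.prod_reverse_take_succ {M : Type*} [Monoid M] (L : List M) {i : ℕ}
    (hi : i < L.length) : (L.take (i + 1)).reverse.prod = L[i] * (L.take i).reverse.prod := by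
  rw [List.take_add_one, List.getElem?_eq_getElem hi, Option.toList_some, List.reverse_append,
    List.prod_append, List.reverse_singleton, List.prod_singleton]

theorem List.prod_reverse_ofFn_smul {M S : Type*} [Monoid M] [CommMonoid S] [MulAction S M]
    [IsScalarTower S M M] [SMulCommClass S M M] {m : ℕ} (u : Fin m → S) (B : Fin m → M) :
    (List.ofFn fun i => u i • B i).reverse.prod = (∏ i, u i) • (List.ofFn B).reverse.prod := by
  induction m with
  | zero => simp
  | succ m ih =>
    simp only [List.ofFn_succ, List.reverse_cons, List.prod_append, List.prod_singleton,
      ih, Fin.prod_univ_succ, smul_mul_assoc, mul_smul_comm, smul_smul]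

namespace Matrix

variable {ι κ R : Type*} [CommRing R] [Fintype κ] [DecidableEq κ]

theorem det_comp_of_isLowerTriangular [LinearOrder ι] [Fintype ι] [DecidableEq ι]
    {M : Matrix ι ι (Matrix κ κ R)} (h : M.IsLowerTriangular) :
    (comp ι ι κ κ R M).det = ∏ i, (M i i).det := by
  rw [h.comp.det_fintype]
  refine (Fintype.prod_equiv OrderDual.toDual _ _ fun i => ?_).symm
  let e : κ ≃ {x : ι × κ // OrderDual.toDual x.1 = OrderDual.toDual i} :=
    { toFun a := ⟨(i, a), rfl⟩
      invFun x := x.1.2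
      left_inv _ := rfl
      right_inv x := Subtype.ext (Prod.ext x.2.symm rfl) }
  rw [← det_submatrix_equiv_self e]
  rfl

theorem det_comp_one_updateCol_zero {k : ℕ} (F : Fin (k + 1) → Matrix κ κ R) :
    (comp _ _ κ κ R ((1 : Matrix (Fin (k + 1)) (Fin (k + 1)) (Matrix κ κ R)).updateCol 0 F)).det
      = (F 0).det := by
  rw [det_comp_of_isLowerTriangular, Fin.prod_univ_succ]
  · simp [Fin.succ_ne_zero]
  · intro i j hij
    have hij : i < j := hij
    simp [Fin.ne_zero_of_lt hij, hij.ne]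

theorem diagonal_sub_permMatrix_mulVec_apply {S : Type*} [Ring S] [Fintype ι] [DecidableEq ι]
    (A F : ι → S) (σ : Equiv.Perm ι) (i : ι) :
    ((diagonal A - σ.permMatrix S) *ᵥ F) i = A i * F i - F (σ i) := by
  simp [mulVec, dotProduct, PEquiv.toMatrix_apply, sub_mul, Finset.sum_sub_distrib, diagonal_apply,
    ite_mul]

theorem det_comp_updateCol_zero_single_last {k : ℕ} (A : Fin (k + 1) → Matrix κ κ R)
    (X : Matrix κ κ R) :
    (comp _ _ κ κ R ((diagonal A - (finRotate (k + 1)).permMatrix _).updateCol 0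
      (Pi.single (Fin.last k) X))).det = X.det := by
  set T := (diagonal A - (finRotate (k + 1)).permMatrix _).updateCol 0 (Pi.single (Fin.last k) X)
  set σ : Equiv.Perm (Fin (k + 1) × κ) := Equiv.prodCongrLeft fun _ => finRotate (k + 1)
  set s : R := ((Equiv.Perm.sign σ : ℤ) : R)
  have hs : s * s = 1 := by simp [s, ← Int.cast_mul, ← Units.val_mul, Int.units_mul_self]
  have hcomp : (comp _ _ κ κ R T).submatrix id σ =
      comp _ _ κ κ R (T.submatrix id (finRotate (k + 1))) := rfl
  have hlower : (T.submatrix id (finRotate (k + 1))).IsLowerTriangular := by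
    intro i j hij
    have hij : i < j := hij
    induction j using Fin.lastCases with
    | last => simp [T, hij.ne]
    | cast j =>
      have hsucc : i + 1 ≠ j.succ := fun h =>
        hij.ne (add_right_cancel (h.trans Fin.coeSucc_eq_succ.symm))
      simp [T, Fin.coeSucc_eq_succ, (hij.trans Fin.castSucc_lt_succ).ne, hsucc,
        PEquiv.toMatrix_apply]
  have hdiag : (comp _ _ κ κ R (T.submatrix id (finRotate (k + 1)))).det = s * X.det := by
    rw [det_comp_of_isLowerTriangular hlower, Fin.prod_univ_castSucc]
    simp [T, s, σ, Fin.coeSucc_eq_succ, PEquiv.toMatrix_apply, Fin.castSucc_lt_succ.ne, det_neg,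
      Equiv.Perm.sign_prodCongrLeft, sign_finRotate, ← pow_mul, mul_comm]
  calc _ = s * s * (comp _ _ κ κ R T).det := by rw [hs, one_mul]
    _ = s * (s * X.det) := by rw [mul_assoc, ← det_permute', hcomp, hdiag]
    _ = X.det := by rw [← mul_assoc, hs, one_mul]

theorem det_comp_diagonal_sub_finRotate_permMatrix {k : ℕ} (A : Fin (k + 1) → Matrix κ κ R) :
    (comp _ _ κ κ R (diagonal A - (finRotate (k + 1)).permMatrix _)).det
      = ((List.ofFn A).reverse.prod - 1).det := by
  set C := diagonal A - (finRotate (k + 1)).permMatrix (Matrix κ κ R)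
  set F : Fin (k + 1) → Matrix κ κ R := fun i => ((List.ofFn A).take i).reverse.prod
  have hAF (i : Fin (k + 1)) : A i * F i = ((List.ofFn A).take (i + 1)).reverse.prod := by
    rw [List.prod_reverse_take_succ _ (by simpa using i.isLt), List.getElem_ofFn]
  have hCF : C *ᵥ F = Pi.single (Fin.last k) ((List.ofFn A).reverse.prod - 1) := by
    ext1 i
    rw [diagonal_sub_permMatrix_mulVec_apply, finRotate_apply, hAF]
    induction i using Fin.lastCases with
    | last => simp [F, List.take_of_length_le]
    | cast j => simp [F, Fin.coeSucc_eq_succ]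
  calc (comp _ _ κ κ R C).det
      = (comp _ _ κ κ R C).det * (comp _ _ κ κ R ((1 : Matrix _ _ _).updateCol 0 F)).det := by
        rw [det_comp_one_updateCol_zero]
        simp [F]
    _ = (comp _ _ κ κ R (C * (1 : Matrix _ _ _).updateCol 0 F)).det := by
        rw [← det_mul]
        exact congrArg det (map_mul (compRingEquiv _ _ R) C _).symm
    _ = _ := by rw [mul_updateCol, mul_one, hCF, det_comp_updateCol_zero_single_last]

end Matrix

theorem cyclic_block_det_scaled_general {R : Type*} [CommRing R] (n m : ℕ) (hm : 2 ≤ m)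
    (B : Fin m → Matrix (Fin n) (Fin n) R) (u : Fin m → R)
    (C : Matrix (Fin m × Fin n) (Fin m × Fin n) R)
    (hC : ∀ i j : Fin m × Fin n, C i j =
      if j.1 = i.1 then u i.1 * B i.1 i.2 j.2
      else if (j.1 : ℕ) = ((i.1 : ℕ) + 1) % m then (-(1 : Matrix (Fin n) (Fin n) R)) i.2 j.2
      else 0) :
    C.det = ((∏ i, u i) • (List.ofFn B).reverse.prod - 1).det := by
  obtain ⟨k, rfl⟩ : ∃ k, m = k + 1 := ⟨m - 1, by omega⟩
  have hC_block : C = comp _ _ _ _ R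
      (diagonal (fun i => u i • B i) - (finRotate (k + 1)).permMatrix _) := by
    ext ⟨i, a⟩ ⟨j, b⟩
    have hsucc : i + 1 = j ↔ (j : ℕ) = ((i : ℕ) + 1) % (k + 1) := by
      rw [Fin.ext_iff, Fin.val_add, eq_comm]
      simp
    have hsucc_ne : i + 1 ≠ i := fun h => by
      have := add_eq_left.mp h
      rw [Fin.one_eq_zero_iff] at this
      omega
    rw [hC]
    simp only [← hsucc]
    by_cases hji : j = i
    · subst hji
      simp [hsucc_ne, PEquiv.toMatrix_apply]
    · by_cases hij : i + 1 = j <;> simp [hji, Ne.symm hji, hij, PEquiv.toMatrix_apply]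
  rw [hC_block, det_comp_diagonal_sub_finRotate_permMatrix, List.prod_reverse_ofFn_smul]

/-- The cyclic block matrix with diagonal blocks `uᵢ Bᵢ`, blocks `-Iₙ` in positions
`(i, i+1)` (cyclically, so block `(m,1)` is `-Iₙ`) and zero blocks otherwise has
determinant `det (u·B - Iₙ)` where `u = u₁ ⋯ uₘ` and `B = Bₘ B_{m-1} ⋯ B₁`. -/
theorem cyclic_block_det_scaled {R : Type*} [CommRing R] (n m : ℕ) (hn : 1 ≤ n) (hm : 2 ≤ m)
    (B : Fin m → Matrix (Fin n) (Fin n) R) (u : Fin m → R)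
    (C : Matrix (Fin m × Fin n) (Fin m × Fin n) R)
    (hC : ∀ i j : Fin m × Fin n, C i j =
      if j.1 = i.1 then u i.1 * B i.1 i.2 j.2
      else if (j.1 : ℕ) = ((i.1 : ℕ) + 1) % m then (-(1 : Matrix (Fin n) (Fin n) R)) i.2 j.2
      else 0) :
    C.det = ((∏ i, u i) • (List.ofFn B).reverse.prod - 1).det :=
  cyclic_block_det_scaled_general n m hm B u C hC
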